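/- Let D be an n×n distance matrix whose compaction vector is the zero vector, i.e., for every index i, min over p ≠ i, r ≠ i of (D(p,i) + D(i,r) - D(p,r)) = 0. Suppose D satisfies the cycle-realization condition with respect to the cyclic permutation π = (2,3,…,n,1): for all i and 1 ≤ s ≤ n-1, D(i, i+s mod n) equals the minimum of the two arc sums of consecutive distances. Then for every i, D(i-1, i) + D(i, i+1) = D(i-1, i+1) (indices modulo n). -/

import Mathlib

noncomputable def walkWeight {V : Type*} {G : SimpleGraph V} (w : V → V → ℝ) {u v : V}
    (p : G.Walk u v) : ℝ := (p.darts.map (fun d => w d.fst d.snd)).sum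

noncomputable def gdist {V : Type*} (G : SimpleGraph V) (w : V → V → ℝ) (u v : V) : ℝ :=
  sInf {x | ∃ p : G.Walk u v, x = walkWeight w p}

def IsDistanceMatrix {n : ℕ} (D : Fin n → Fin n → ℝ) : Prop :=
  (∀ i j, D i j = D j i) ∧ (∀ i, D i i = 0) ∧ (∀ i j, 0 ≤ D i j) ∧
    (∀ i j k, D i j ≤ D i k + D k j)

def Ematrix {n : ℕ} (i : Fin n) : Fin n → Fin n → ℝ :=
  fun j k => if (j = i ∧ k ≠ i) ∨ (j ≠ i ∧ k = i) then 1 else 0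

noncomputable def compaction {n : ℕ} (D : Fin n → Fin n → ℝ) (i : Fin n) : ℝ :=
  (1/2) * sInf {x | ∃ p r : Fin n, p ≠ i ∧ r ≠ i ∧ x = D p i + D i r - D p r}

open Fin.NatCast

open Finset

/-!
Under the cycle condition `D` is the path metric of a cycle of circumference `P`. Measuring
arc length from `i`, two points `p, r ≠ i` sit (after possibly swapping them) at positions
`y ≤ u ≤ v ≤ P - x`, where `x` and `y` are the lengths of the two edges at `i`, and `D(p,i)`,
`D(i,r)`, `D(p,r)` are `min t (P - t)` at `t = u, v, v - u`. A case analysis on these minima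
shows that the defect `D(p,i) + D(i,r) - D(p,r)` is smallest for the two neighbours of `i`.
Zero compaction makes this minimum `≤ 0`, and the triangle inequality makes it `≥ 0`.
-/

/-- Distance on a circle of circumference `P` between points at arc length `t ∈ [0, P]` apart. -/
noncomputable def cycleDist (P t : ℝ) : ℝ := min t (P - t)

lemma cycleDist_add_sub_le (P x y u v : ℝ) (hx : 0 ≤ x) (hy : 0 ≤ y)
    (hyu : y ≤ u) (huv : u ≤ v) (hv : v ≤ P - x) :
    cycleDist P x + cycleDist P y - cycleDist P (x + y) ≤
      cycleDist P u + cycleDist P v - cycleDist P (v - u) := by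
  simp only [cycleDist, min_def]
  split_ifs <;> linarith

section Cycle

variable {n : ℕ} [NeZero n] (D : Fin n → Fin n → ℝ)

noncomputable def arcLen (j : Fin n) (s : ℕ) : ℝ :=
  ∑ t ∈ range s, D (j + t) (j + t + 1)

noncomputable def perimeter : ℝ := ∑ x : Fin n, D x (x + 1)

def IsCycleRealized : Prop :=
  ∀ (i : Fin n) (s : ℕ), 1 ≤ s → s ≤ n - 1 →
    D i (i + (s : Fin n)) =
      min (∑ t ∈ range s, D (i + (t : Fin n)) (i + (t : Fin n) + 1))
          (∑ t ∈ Ico s n, D (i + (t : Fin n)) (i + (t : Fin n) + 1))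

lemma arcLen_add (j : Fin n) (a b : ℕ) :
    arcLen D j (a + b) = arcLen D j a + arcLen D (j + a) b := by
  simp only [arcLen, sum_range_add, Nat.cast_add, add_assoc]

lemma arcLen_one (j : Fin n) : arcLen D j 1 = D j (j + 1) := by
  simp [arcLen]

lemma arcLen_length (j : Fin n) : arcLen D j n = perimeter D := by
  rw [arcLen, ← Fin.sum_univ_eq_sum_range (fun t => D (j + t) (j + t + 1))]
  simp only [Fin.cast_val_eq_self]
  exact Fintype.sum_equiv (Equiv.addLeft j) _ _ fun _ => rfl

lemma arcLen_add_sum_Ico (j : Fin n) {s : ℕ} (hs : s ≤ n) :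
    arcLen D j s + ∑ t ∈ Ico s n, D (j + t) (j + t + 1) = perimeter D := by
  rw [← arcLen_length D j, arcLen, arcLen, range_eq_Ico, range_eq_Ico,
    sum_Ico_consecutive _ (Nat.zero_le s) hs]

lemma arcLen_sub_one_add (j : Fin n) : arcLen D j (n - 1) + D (j - 1) j = perimeter D := by
  have hj : j + ((n - 1 : ℕ) : Fin n) = j - 1 := by
    have hneg : ((n - 1 : ℕ) : Fin n) + 1 = 0 := by
      rw [← Nat.cast_add_one, Nat.sub_add_cancel (Nat.pos_of_neZero n), Fin.natCast_self]
    rw [eq_neg_of_add_eq_zero_left hneg, sub_eq_add_neg]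
  have h := arcLen_add D j (n - 1) 1
  rwa [Nat.sub_add_cancel (Nat.pos_of_neZero n), arcLen_length, hj, arcLen_one, sub_add_cancel,
    eq_comm] at h

lemma arcLen_nonneg (hnonneg : ∀ i j, 0 ≤ D i j) (j : Fin n) (s : ℕ) : 0 ≤ arcLen D j s :=
  sum_nonneg fun _ _ => hnonneg _ _

lemma arcLen_mono (hnonneg : ∀ i j, 0 ≤ D i j) (j : Fin n) : Monotone (arcLen D j) :=
  fun _ _ h => sum_le_sum_of_subset_of_nonneg (range_subset_range.mpr h) fun _ _ _ => hnonneg _ _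

lemma IsCycleRealized.dist_eq (hD : IsDistanceMatrix D) (hcyc : IsCycleRealized D)
    (j : Fin n) {s : ℕ} (hs : s < n) :
    D j (j + s) = cycleDist (perimeter D) (arcLen D j s) := by
  obtain ⟨-, hdiag, hnn, -⟩ := hD
  rcases Nat.eq_zero_or_pos s with rfl | hs0
  · have : 0 ≤ perimeter D := arcLen_length D j ▸ arcLen_nonneg D hnn j n
    simp [cycleDist, arcLen, hdiag, this]
  · rw [hcyc j s hs0 (by omega), cycleDist, ← arcLen_add_sum_Ico D j hs.le]
    simp only [arcLen, add_sub_cancel_left]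

lemma IsCycleRealized.neighbor_defect_le (hn : 3 ≤ n) (hD : IsDistanceMatrix D)
    (hcyc : IsCycleRealized D) {i p r : Fin n} (hp : p ≠ i) (hr : r ≠ i) :
    D (i - 1) i + D i (i + 1) - D (i - 1) (i + 1) ≤ D p i + D i r - D p r := by
  have hdist := hcyc.dist_eq D hD
  obtain ⟨hsymm, -, hnn, -⟩ := hD
  wlog hpr : (p - i).val ≤ (r - i).val generalizing p r
  · linarith [this hr hp (le_of_not_ge hpr), hsymm r i, hsymm i p, hsymm r p]
  set a := (p - i).val
  set b := (r - i).val
  have hpa : p = i + a := by simp [a]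
  have hrb : r = i + b := by simp [b]
  have ha : 1 ≤ a :=
    Nat.one_le_iff_ne_zero.mpr fun h => hp (sub_eq_zero.mp (Fin.val_eq_zero_iff.mp h))
  have hb : b < n := (r - i).isLt
  have hDx : D (i - 1) i = cycleDist (perimeter D) (arcLen D (i - 1) 1) := by
    simpa using hdist (i - 1) (s := 1) (by omega)
  have hDy : D i (i + 1) = cycleDist (perimeter D) (arcLen D i 1) := by
    simpa using hdist i (s := 1) (by omega)
  have hDxy : D (i - 1) (i + 1) =
      cycleDist (perimeter D) (arcLen D (i - 1) 1 + arcLen D i 1) := by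
    have h := hdist (i - 1) (s := 1 + 1) (by omega)
    rwa [arcLen_add, Nat.cast_add, Nat.cast_one, ← add_assoc, sub_add_cancel] at h
  have hDu : D p i = cycleDist (perimeter D) (arcLen D i a) := by
    rw [hsymm, hpa, hdist i (by omega)]
  have hDv : D i r = cycleDist (perimeter D) (arcLen D i b) := by
    rw [hrb, hdist i hb]
  have hDuv : D p r = cycleDist (perimeter D) (arcLen D i b - arcLen D i a) := by
    have hr' : r = i + a + (b - a : ℕ) := by
      rw [add_assoc, ← Nat.cast_add, Nat.add_sub_cancel' hpr, hrb]
    rw [hr', hpa, hdist _ (by omega), ← Nat.add_sub_cancel' hpr, arcLen_add,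
      Nat.add_sub_cancel_left, add_sub_cancel_left]
  have hvx : arcLen D i b + arcLen D (i - 1) 1 ≤ perimeter D := by
    rw [arcLen_one, sub_add_cancel, ← arcLen_sub_one_add D i]
    exact add_le_add_left (arcLen_mono D hnn i (by omega)) _
  rw [hDx, hDy, hDxy, hDu, hDv, hDuv]
  exact cycleDist_add_sub_le _ _ _ _ _ (arcLen_nonneg D hnn _ _) (arcLen_nonneg D hnn _ _)
    (arcLen_mono D hnn i ha) (arcLen_mono D hnn i hpr) (by linarith)

end Cycle

/-- If the compaction vector of `D` is zero and `D` satisfies the cycle-realization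
condition w.r.t. the permutation `i ↦ i+1 (mod n)`, then
`D(i-1, i) + D(i, i+1) = D(i-1, i+1)` for every `i`. -/
theorem stmt7 {n : ℕ} (hn : 3 ≤ n) [NeZero n] (D : Fin n → Fin n → ℝ)
    (hD : IsDistanceMatrix D)
    (hcomp : ∀ i : Fin n,
      sInf {x | ∃ p r : Fin n, p ≠ i ∧ r ≠ i ∧ x = D p i + D i r - D p r} = 0)
    (hcond : ∀ (i : Fin n) (s : ℕ), 1 ≤ s → s ≤ n - 1 →
      D i (i + (s : Fin n)) =
        min (∑ t ∈ Finset.range s, D (i + (t : Fin n)) (i + (t : Fin n) + 1))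
            (∑ t ∈ Finset.Ico s n, D (i + (t : Fin n)) (i + (t : Fin n) + 1))) :
    ∀ i : Fin n, D (i - 1) i + D i (i + 1) = D (i - 1) (i + 1) := by
  intro i
  have hcyc : IsCycleRealized D := hcond
  have hne : i + 1 ≠ i := fun h => by
    have := Fin.one_eq_zero_iff.mp (add_eq_left.mp h)
    omega
  have hdefect : D (i - 1) i + D i (i + 1) - D (i - 1) (i + 1) ≤ 0 :=
    hcomp i ▸ le_csInf ⟨_, i + 1, i + 1, hne, hne, rfl⟩ fun _ ⟨_, _, hp, hr, hz⟩ =>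
      hz ▸ hcyc.neighbor_defect_le D hn hD hp hr
  linarith [hD.2.2.2 (i - 1) (i + 1) i]
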